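/- arXiv:2510.22083 — 3 statements merged into one kernel-verified Lean document; each statement's English description precedes it below -/
import Mathlib

section
/- Let Φ ∈ ℝ^{n×d}, R ∈ ℝⁿ, λ > 0, and let β̂ = ((1/n)ΦᵀΦ + λI_d)⁻¹ (1/n)ΦᵀR be the ridge regression solution. Then ‖Φᵀ(R − Φβ̂)‖₂ ≤ (max_{1≤j≤d} λ/(λ + σ_j²)) · ‖ΦᵀR‖₂, where σ_j² are the eigenvalues of (1/n)ΦᵀΦ. -/
open Matrix

/-- Euclidean (ℓ²) norm of a finite real vector. -/
noncomputable def enorm3 {n : ℕ} (v : Fin n → ℝ) : ℝ :=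
  ‖(WithLp.equiv 2 (Fin n → ℝ)).symm v‖

/-!
With `A = (1/n)ΦᵀΦ` and `B = A + λ`, the matrix `B` commutes with `ΦᵀΦ` and `B β̂ = (1/n)ΦᵀR`,
so the error vector `g = Φᵀ(R − Φβ̂)` solves `B g = λ ΦᵀR`. In an orthonormal eigenbasis of `A`
this reads `(λ + σ_j²) g_j = λ (ΦᵀR)_j`: each coordinate is scaled by `λ/(λ + σ_j²)`, and the
change to the eigenbasis is an isometry.
-/

open WithLp

lemma EuclideanSpace.norm_le_mul_norm_of_forall_norm_le {𝕜 ι : Type*} [RCLike 𝕜] [Fintype ι]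
    {x y : EuclideanSpace 𝕜 ι} {c : ℝ} (hc : 0 ≤ c) (h : ∀ i, ‖x i‖ ≤ c * ‖y i‖) :
    ‖x‖ ≤ c * ‖y‖ := by
  rw [EuclideanSpace.norm_eq, EuclideanSpace.norm_eq, ← Real.sqrt_sq hc,
    ← Real.sqrt_mul (sq_nonneg c), Finset.mul_sum]
  gcongr with i
  rw [← mul_pow]
  exact pow_le_pow_left₀ (norm_nonneg _) (h i) 2

namespace Matrix

variable {ι : Type*} [Fintype ι] [DecidableEq ι]

lemma norm_toLp_mulVec_of_mem_unitaryGroup {𝕜 : Type*} [RCLike 𝕜] {U : Matrix ι ι 𝕜}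
    (hU : U ∈ unitaryGroup ι 𝕜) (x : ι → 𝕜) : ‖toLp 2 (U *ᵥ x)‖ = ‖toLp 2 x‖ :=
  (toEuclideanCLM (n := ι) (𝕜 := 𝕜) U).norm_map_of_mem_unitary
    (Unitary.map_mem toEuclideanCLM hU) (toLp 2 x)

/-- `v - M β` for the ridge solution `β = (s M + λ)⁻¹ (s v)`; the identity holds because `M`
commutes with `s M + λ`. -/
lemma mulVec_ridge_residual {K : Type*} [Field K] (M : Matrix ι ι K) (s lam : K)
    (hB : IsUnit (s • M + lam • 1)) (v : ι → K) :
    (s • M + lam • 1) *ᵥ (v - M *ᵥ ((s • M + lam • 1)⁻¹ *ᵥ (s • v))) = lam • v := by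
  set B := s • M + lam • (1 : Matrix ι ι K)
  have hBβ : B *ᵥ (B⁻¹ *ᵥ (s • v)) = s • v := by
    rw [mulVec_mulVec, mul_nonsing_inv _ ((isUnit_iff_isUnit_det B).mp hB), one_mulVec]
  have hcomm : B * M = M * B := by
    simp only [B, add_mul, mul_add, smul_mul_assoc, mul_smul_comm, one_mul, mul_one]
  rw [mulVec_sub, mulVec_mulVec, hcomm, ← mulVec_mulVec, hBβ, mulVec_smul]
  simp only [B, add_mulVec, smul_mulVec, one_mulVec]
  abel

lemma IsHermitian.star_eigenvectorUnitary_mul_add_smul_one_mul {A : Matrix ι ι ℝ}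
    (hA : A.IsHermitian) (lam : ℝ) :
    star (hA.eigenvectorUnitary : Matrix ι ι ℝ) * (A + lam • 1) * hA.eigenvectorUnitary =
      diagonal fun j => lam + hA.eigenvalues j := by
  have hconj := hA.conjStarAlgAut_star_eigenvectorUnitary
  rw [Unitary.conjStarAlgAut_star_apply, RCLike.ofReal_real_eq_id, Function.id_comp] at hconj
  rw [mul_add, add_mul, hconj, mul_smul_comm, mul_one, smul_mul_assoc,
    Unitary.coe_star_mul_self, smul_one_eq_diagonal, diagonal_add]
  exact congrArg diagonal (funext fun j => add_comm _ _)

lemma IsHermitian.norm_le_of_add_smul_one_mulVec_eq {A : Matrix ι ι ℝ} (hA : A.IsHermitian)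
    {lam : ℝ} (hlam : 0 ≤ lam) (hpos : ∀ j, 0 < lam + hA.eigenvalues j) {g v : ι → ℝ}
    (h : (A + lam • 1) *ᵥ g = lam • v) :
    ‖toLp 2 g‖ ≤ (⨆ j, lam / (lam + hA.eigenvalues j)) * ‖toLp 2 v‖ := by
  set σ := hA.eigenvalues
  set U : Matrix ι ι ℝ := ↑hA.eigenvectorUnitary
  have hStarU : star U ∈ unitaryGroup ι ℝ := Unitary.star_mem hA.eigenvectorUnitary.2
  have hUU : U * star U = 1 := Unitary.coe_mul_star_self hA.eigenvectorUnitary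
  have hdiag := hA.star_eigenvectorUnitary_mul_add_smul_one_mul lam
  have hcoord (j : ι) : (lam + σ j) * (star U *ᵥ g) j = lam * (star U *ᵥ v) j :=
    calc (lam + σ j) * (star U *ᵥ g) j = ((diagonal fun j => lam + σ j) *ᵥ (star U *ᵥ g)) j := by
          rw [mulVec_diagonal]
      _ = (star U *ᵥ ((A + lam • 1) *ᵥ g)) j := by
          rw [← hdiag, mulVec_mulVec, mul_assoc, hUU, mul_one, ← mulVec_mulVec]
      _ = lam * (star U *ᵥ v) j := by rw [h, mulVec_smul, Pi.smul_apply, smul_eq_mul]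
  have hratio (j : ι) : 0 ≤ lam / (lam + σ j) := div_nonneg hlam (hpos j).le
  rw [← norm_toLp_mulVec_of_mem_unitaryGroup hStarU g,
    ← norm_toLp_mulVec_of_mem_unitaryGroup hStarU v]
  refine EuclideanSpace.norm_le_mul_norm_of_forall_norm_le (Real.iSup_nonneg hratio) fun j => ?_
  have hw : (star U *ᵥ g) j = lam / (lam + σ j) * (star U *ᵥ v) j := by
    rw [div_mul_eq_mul_div, eq_div_iff (hpos j).ne', mul_comm, hcoord]
  rw [ofLp_toLp, ofLp_toLp, Real.norm_eq_abs, Real.norm_eq_abs, hw, abs_mul,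
    abs_of_nonneg (hratio j)]
  exact mul_le_mul_of_nonneg_right
    (le_ciSup (f := fun j => lam / (lam + σ j)) (Finite.bddAbove_range _) j) (abs_nonneg _)

end Matrix

/-- One ridge-boosting step contracts the sample multiaccuracy error:
`‖Φᵀ(R − Φβ̂)‖₂ ≤ (max_j λ/(λ+σ_j²)) ‖ΦᵀR‖₂` where `σ_j²` are the eigenvalues of
`(1/n)ΦᵀΦ` and `β̂` is the ridge solution. -/
theorem ridge_boosting_contracts_mae
    {n d : ℕ} (Φ : Matrix (Fin n) (Fin d) ℝ) (R : Fin n → ℝ) (lam : ℝ) (hlam : 0 < lam)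
    (hA : ((1 / (n : ℝ)) • (Φᵀ * Φ)).IsHermitian)
    (βhat : Fin d → ℝ)
    (hβ : βhat = ((1 / (n : ℝ)) • (Φᵀ * Φ) + lam • (1 : Matrix (Fin d) (Fin d) ℝ))⁻¹ *ᵥ
      ((1 / (n : ℝ)) • (Φᵀ *ᵥ R))) :
    enorm3 (Φᵀ *ᵥ (R - Φ *ᵥ βhat)) ≤
      (⨆ j : Fin d, lam / (lam + hA.eigenvalues j)) * enorm3 (Φᵀ *ᵥ R) := by
  have hpsd : ((1 / (n : ℝ)) • (Φᵀ * Φ)).PosSemidef := by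
    rw [← conjTranspose_eq_transpose_of_trivial]
    exact (posSemidef_conjTranspose_mul_self Φ).smul (by positivity)
  have hB : IsUnit ((1 / (n : ℝ)) • (Φᵀ * Φ) + lam • 1) :=
    (PosDef.posSemidef_add hpsd (PosDef.one.smul hlam)).isUnit
  have hres := mulVec_ridge_residual (Φᵀ * Φ) (1 / (n : ℝ)) lam hB (Φᵀ *ᵥ R)
  rw [← mulVec_mulVec, ← mulVec_sub, ← hβ] at hres
  exact hA.norm_le_of_add_smul_one_mulVec_eq hlam.le
    (fun j => add_pos_of_pos_of_nonneg hlam (hpsd.eigenvalues_nonneg j)) hres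
end

section
/- Let Φ_p ∈ ℝ^{n×d}, Z ∈ ℝⁿ, λ > 0, and let θ: functions → ℝ be linear with feature representation vector θ(Φ_p) ∈ ℝ^d (so θ applied to x ↦ φ(x)ᵀβ equals θ(Φ_p)ᵀβ). Let β̂ = ((1/n)ΦᵀΦ + λI)⁻¹(1/n)ΦᵀZ be the ridge regression of Z on Φ, and let η̂ = argmin_η { (1/n)ηᵀΦᵀΦη − 2θ(Φ_p)ᵀη + λ‖η‖² } be the penalized Riesz regression solution, with α̂(x) = φ(x)ᵀη̂. Then θ applied to the ridge predictor equals the weighting estimator: θ(Φ_p)ᵀβ̂ = (1/n)·(Φη̂)ᵀZ. -/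
open Matrix

private lemma dot_mulVec_swap {k l : ℕ} (A : Matrix (Fin k) (Fin l) ℝ)
    (x : Fin l → ℝ) (y : Fin k → ℝ) : (A *ᵥ x) ⬝ᵥ y = x ⬝ᵥ (Aᵀ *ᵥ y) := by
  rw [Matrix.dotProduct_mulVec, Matrix.vecMul_transpose, dotProduct_comm]

/-- Numerical equivalence of the ridge plug-in estimator and the
Riesz-weighting estimator: `θ(Φ)ᵀβ̂ = (1/n)(Φη̂)ᵀZ`, where `β̂` is the ridge
regression of `Z` on `Φ` and `η̂` is the minimizer of the penalized Riesz loss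
`(1/n)ηᵀΦᵀΦη − 2θ(Φ)ᵀη + λ‖η‖²`. -/
theorem ridge_riesz_numerical_equivalence
    {n d : ℕ} (Φ : Matrix (Fin n) (Fin d) ℝ) (Z : Fin n → ℝ) (lam : ℝ) (hlam : 0 < lam)
    (θv : Fin d → ℝ)
    (βhat : Fin d → ℝ)
    (hβ : βhat = ((1 / (n : ℝ)) • (Φᵀ * Φ) + lam • (1 : Matrix (Fin d) (Fin d) ℝ))⁻¹ *ᵥ
      ((1 / (n : ℝ)) • (Φᵀ *ᵥ Z)))
    (L : (Fin d → ℝ) → ℝ)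
    (hL : L = fun η => (1 / (n : ℝ)) * (η ⬝ᵥ ((Φᵀ * Φ) *ᵥ η)) - 2 * (θv ⬝ᵥ η) +
      lam * (η ⬝ᵥ η))
    (ηhat : Fin d → ℝ) (hηmin : ∀ η : Fin d → ℝ, L ηhat ≤ L η) :
    θv ⬝ᵥ βhat = (1 / (n : ℝ)) * ((Φ *ᵥ ηhat) ⬝ᵥ Z) := by
  set M : Matrix (Fin d) (Fin d) ℝ :=
    (1 / (n : ℝ)) • (Φᵀ * Φ) + lam • (1 : Matrix (Fin d) (Fin d) ℝ) with hM
  have hMsymm : Mᵀ = M := by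
    simp [hM, transpose_add, transpose_smul, transpose_mul, Matrix.transpose_one]
  have hLM : ∀ η, L η = η ⬝ᵥ (M *ᵥ η) - 2 * (θv ⬝ᵥ η) := by
    intro η
    simp only [hL, hM, Matrix.add_mulVec, Matrix.smul_mulVec, Matrix.one_mulVec,
      dotProduct_add, dotProduct_smul, smul_eq_mul]
    ring
  have hnn : (0:ℝ) ≤ 1 / (n : ℝ) := by positivity
  have hpos : ∀ x : Fin d → ℝ, x ≠ 0 → 0 < x ⬝ᵥ (M *ᵥ x) := by
    intro x hx
    have h1 : x ⬝ᵥ (M *ᵥ x)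
        = (1 / (n : ℝ)) * ((Φ *ᵥ x) ⬝ᵥ (Φ *ᵥ x)) + lam * (x ⬝ᵥ x) := by
      simp only [hM, Matrix.add_mulVec, Matrix.smul_mulVec, Matrix.one_mulVec,
        dotProduct_add, dotProduct_smul, smul_eq_mul]
      rw [← Matrix.mulVec_mulVec, ← dot_mulVec_swap Φ x (Φ *ᵥ x)]
    rw [h1]
    have h2 : 0 ≤ (Φ *ᵥ x) ⬝ᵥ (Φ *ᵥ x) :=
      Finset.sum_nonneg fun j _ => mul_self_nonneg _
    have h3 : 0 < x ⬝ᵥ x := by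
      rcases Function.ne_iff.mp hx with ⟨i, hi⟩
      have hi' : x i ≠ 0 := hi
      have hpi : 0 < x i * x i := mul_self_pos.mpr hi'
      calc (0:ℝ) < x i * x i := hpi
        _ ≤ x ⬝ᵥ x :=
          Finset.single_le_sum (fun j _ => mul_self_nonneg (x j)) (Finset.mem_univ i)
    nlinarith [mul_nonneg hnn h2]
  have hstat : M *ᵥ ηhat = θv := by
    funext i
    by_contra hne
    set v : Fin d → ℝ := Pi.single i 1 with hv
    have hvne : v ≠ 0 := by
      intro h
      have := congrFun h i
      simp [hv] at this
    set a : ℝ := v ⬝ᵥ (M *ᵥ v) with ha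
    have hapos : 0 < a := hpos v hvne
    set c : ℝ := v ⬝ᵥ (M *ᵥ ηhat) - θv ⬝ᵥ v with hc
    have key : ∀ t : ℝ, 0 ≤ a * t ^ 2 + 2 * c * t := by
      intro t
      have h := hηmin (ηhat + t • v)
      rw [hLM, hLM] at h
      have hsym2 : ηhat ⬝ᵥ (M *ᵥ v) = v ⬝ᵥ (M *ᵥ ηhat) := by
        rw [dotProduct_comm, dot_mulVec_swap M v ηhat, hMsymm]
      have hexp : (ηhat + t • v) ⬝ᵥ (M *ᵥ (ηhat + t • v))
          = ηhat ⬝ᵥ (M *ᵥ ηhat) + 2 * t * (v ⬝ᵥ (M *ᵥ ηhat)) + t ^ 2 * a := by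
        simp only [Matrix.mulVec_add, Matrix.mulVec_smul, add_dotProduct,
          dotProduct_add, smul_dotProduct, dotProduct_smul, smul_eq_mul, ha]
        rw [hsym2]; ring
      have hθ : θv ⬝ᵥ (ηhat + t • v) = θv ⬝ᵥ ηhat + t * (θv ⬝ᵥ v) := by
        simp [dotProduct_add, dotProduct_smul, smul_eq_mul]
      rw [hexp, hθ] at h
      rw [hc]
      nlinarith [h]
    have hc0 : c = 0 := by
      by_contra hcne
      have hkey := key (-c / a)
      have hane : a ≠ 0 := ne_of_gt hapos
      have heq : a * (-c / a) ^ 2 + 2 * c * (-c / a) = -(c ^ 2) / a := by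
        field_simp; ring
      rw [heq] at hkey
      have hcsq : 0 < c ^ 2 := by positivity
      have : 0 < c ^ 2 / a := by positivity
      have : -(c ^ 2) / a < 0 := by linarith [neg_div a (c ^ 2)]
      linarith
    apply hne
    have h1 : v ⬝ᵥ (M *ᵥ ηhat) = (M *ᵥ ηhat) i := by
      simp [hv, dotProduct, Pi.single_apply]
    have h2 : θv ⬝ᵥ v = θv i := by
      simp [hv, dotProduct, Pi.single_apply]
    have hfin := hc0
    rw [hc, h1, h2] at hfin
    linarith
  have hdet : IsUnit M.det := by
    by_contra hnotunit
    have hdet0 : M.det = 0 := by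
      simpa [isUnit_iff_ne_zero] using hnotunit
    obtain ⟨x, hx0, hxker⟩ := Matrix.exists_mulVec_eq_zero_iff.mpr hdet0
    have := hpos x hx0
    rw [hxker] at this
    simp at this
  rw [hβ, ← hstat]
  rw [dot_mulVec_swap M ηhat _, hMsymm, Matrix.mulVec_mulVec, Matrix.mul_nonsing_inv _ hdet,
    Matrix.one_mulVec, dotProduct_smul, smul_eq_mul, ← dot_mulVec_swap Φ ηhat Z]
end

section
/- Let γ̂_ma = γ̂_init + γ̂_boost where γ̂_boost(x) = φ(x)ᵀβ̂ and β̂ solves the ridge problem on residuals. Then for any linear functional θ with sample plug-in θ̂, the plug-in estimate decomposes as θ̂(γ̂_ma) = θ̂(γ̂_init) + (1/n)·α̂_θ(X_p)ᵀ(Y_p − γ̂_init(X_p)), where α̂_θ(x) = φ(x)ᵀ((1/n)Φ_pᵀΦ_p + λI)⁻¹θ(Φ_p) is the ridge Riesz representer estimate. -/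
open Matrix

/-- The ridge-boosted plug-in estimate decomposes as the initial plug-in
plus a bias-correction term weighted by the ridge Riesz representer estimate:
`θ̂(γ̂_ma) = θ̂(γ̂_init) + (1/n)·α̂_θ(X_p)ᵀ(Y_p − γ̂_init(X_p))`. -/
theorem ridge_boosting_debiased_decomposition
    {𝒳 : Type*} {n d : ℕ}
    (T : (𝒳 → ℝ) →ₗ[ℝ] ℝ)               -- the (sample plug-in of the) linear functional θ̂
    (φ : 𝒳 → Fin d → ℝ) (θv : Fin d → ℝ)
    (hθv : ∀ β : Fin d → ℝ, T (fun x => φ x ⬝ᵥ β) = θv ⬝ᵥ β)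
    (xs : Fin n → 𝒳) (Yp : Fin n → ℝ) (γinit : 𝒳 → ℝ)
    (Φp : Matrix (Fin n) (Fin d) ℝ) (hΦp : Φp = fun i j => φ (xs i) j)
    (lam : ℝ) (hlam : 0 < lam)
    (βhat : Fin d → ℝ)
    (hβ : βhat = ((1 / (n : ℝ)) • (Φpᵀ * Φp) + lam • (1 : Matrix (Fin d) (Fin d) ℝ))⁻¹ *ᵥ
      ((1 / (n : ℝ)) • (Φpᵀ *ᵥ (Yp - fun i => γinit (xs i)))))
    (αhat : 𝒳 → ℝ)
    (hα : αhat = fun x => φ x ⬝ᵥ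
      (((1 / (n : ℝ)) • (Φpᵀ * Φp) + lam • (1 : Matrix (Fin d) (Fin d) ℝ))⁻¹ *ᵥ θv))
    (γma : 𝒳 → ℝ) (hγma : γma = fun x => γinit x + φ x ⬝ᵥ βhat) :
    T γma = T γinit + (1 / (n : ℝ)) * ∑ i, αhat (xs i) * (Yp i - γinit (xs i)) := by
  set A : Matrix (Fin d) (Fin d) ℝ :=
    (1 / (n : ℝ)) • (Φpᵀ * Φp) + lam • (1 : Matrix (Fin d) (Fin d) ℝ) with hA
  have hAsym : Aᵀ = A := by
    simp [hA, transpose_add, transpose_smul, transpose_mul, transpose_transpose]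
  have hAinv : (A⁻¹)ᵀ = A⁻¹ := by
    rw [transpose_nonsing_inv, hAsym]
  have hγ : γma = γinit + fun x => φ x ⬝ᵥ βhat := by
    funext x; simp [hγma]
  set v : Fin n → ℝ := Yp - fun i => γinit (xs i) with hv
  have key : θv ⬝ᵥ βhat = (1 / (n : ℝ)) * ∑ i, αhat (xs i) * v i := by
    have h1 : θv ⬝ᵥ βhat = (A⁻¹ *ᵥ θv) ⬝ᵥ ((1 / (n : ℝ)) • (Φpᵀ *ᵥ v)) := by
      rw [hβ, dotProduct_mulVec,
        show θv ᵥ* A⁻¹ = A⁻¹ *ᵥ θv from by conv_lhs => rw [← hAinv, vecMul_transpose]]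
    rw [h1, dotProduct_smul, smul_eq_mul]
    congr 1
    rw [dotProduct_mulVec, vecMul_transpose]
    apply Finset.sum_congr rfl
    intro i _
    congr 1
    rw [hα]
    simp [mulVec, hΦp, dotProduct]
  calc T γma = T γinit + T (fun x => φ x ⬝ᵥ βhat) := by rw [hγ, map_add]
    _ = T γinit + θv ⬝ᵥ βhat := by rw [hθv]
    _ = T γinit + (1 / (n : ℝ)) * ∑ i, αhat (xs i) * (Yp i - γinit (xs i)) := by
        rw [key]; simp [hv]
end
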